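/- Let D be an oriented knot diagram with n ≥ 1 crossings, modeled by a Gauss code g, and let D' be the diagram obtained from D by a crossing change at a crossing c₀. Then (1 + t) · X_D(t) = A + t · B and (1 + t) · X_{D'}(t) = t · A + B in ℤ[t]. -/

import Mathlib

open Polynomial Finset

/-- An oriented knot diagram with `n` crossings, modeled by its oriented Gauss code. -/
structure GaussCode (n : ℕ) where
  g : ZMod (2 * n) → Fin n × Bool
  o : Fin n → ZMod (2 * n)
  u : Fin n → ZMod (2 * n)
  over_iff : ∀ (c : Fin n) (e : ZMod (2 * n)), g e = (c, true) ↔ e = o c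
  under_iff : ∀ (c : Fin n) (e : ZMod (2 * n)), g e = (c, false) ↔ e = u c

namespace GaussCode

variable {n : ℕ}

/-- The warping degree of the base position `e`: the number of crossings whose
under-passage occurs strictly before its over-passage when traversing the diagram
starting at `e`. -/
def d (D : GaussCode n) (e : ZMod (2 * n)) : ℕ :=
  (Finset.univ.filter fun c : Fin n => (D.u c - e).val < (D.o c - e).val).card

/-- The warping crossing polynomial. -/
noncomputable def Xpoly (D : GaussCode n) : Polynomial ℤ :=
  ∑ c : Fin n, Polynomial.X ^ D.d (D.o c)

/-- The warping polynomial. -/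
noncomputable def Wpoly (D : GaussCode n) : Polynomial ℤ :=
  ∑ k ∈ Finset.range (2 * n), Polynomial.X ^ D.d (k : ZMod (2 * n))

/-- The warping degree of the diagram: minimum over all base positions. -/
noncomputable def wdeg (D : GaussCode n) : ℕ :=
  sInf (Set.range fun e : ZMod (2 * n) => D.d e)

/-- The diagram is alternating. -/
def Alternating (D : GaussCode n) : Prop :=
  ∀ e : ZMod (2 * n), (D.g e).2 ≠ (D.g (e + 1)).2

end GaussCode

/-!
Summing `t ^ d e` over all base points `e` gives `(1 + t) X_D`: passing an over-passage raises
the warping degree by one and passing an under-passage lowers it by one, so comparing the sum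
with its shift by one position yields `(1 - t) (X_D - ∑_c t ^ d (u c + 1)) = 0`. A crossing
change at `c₀` only toggles whether `c₀` is counted in `d e`: it adds one on the edges from the
under- to the over-passage of `c₀` and removes one on the others. Splitting `∑_e t ^ d e` along
these two arcs gives both identities.
-/

-- In `ZMod m`, `(a - e).val` is the number of steps from `e` forward to `a`.

namespace ZMod

variable {m : ℕ} [NeZero m]

lemma val_sub_one_add_one {y : ZMod m} (hy : y ≠ 0) : (y - 1).val + 1 = y.val := by
  have hpos : 0 < y.val := Nat.pos_of_ne_zero ((ZMod.val_ne_zero y).mpr hy)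
  have hcast : y - 1 = ((y.val - 1 : ℕ) : ZMod m) := by
    rw [Nat.cast_sub hpos, ZMod.natCast_zmod_val, Nat.cast_one]
  rw [hcast, ZMod.val_natCast_of_lt (by have := ZMod.val_lt y; omega)]
  omega

lemma val_neg_one_add_one : (-1 : ZMod m).val + 1 = m := by
  have hm := NeZero.pos m
  have hcast : (-1 : ZMod m) = ((m - 1 : ℕ) : ZMod m) := by
    rw [Nat.cast_sub hm, ZMod.natCast_self, Nat.cast_one, zero_sub]
  rw [hcast, ZMod.val_natCast_of_lt (by omega)]
  omega

lemma val_sub_add_one_add_one {a e : ZMod m} (h : a ≠ e) :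
    (a - (e + 1)).val + 1 = (a - e).val := by
  rw [← sub_sub]
  exact val_sub_one_add_one (sub_ne_zero.mpr h)

lemma val_self_sub_add_one_add_one (e : ZMod m) : (e - (e + 1)).val + 1 = m := by
  rw [sub_add_cancel_left]
  exact val_neg_one_add_one

lemma sum_range_natCast {M : Type*} [AddCommMonoid M] (f : ZMod m → M) :
    ∑ k ∈ range m, f k = ∑ e, f e :=
  sum_nbij' (fun k => (k : ZMod m)) ZMod.val (fun _ _ => mem_univ _)
    (fun e _ => mem_range.mpr (ZMod.val_lt e))
    (fun _ hk => ZMod.val_natCast_of_lt (mem_range.mp hk))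
    (fun e _ => ZMod.natCast_zmod_val e) fun _ _ => rfl

lemma val_sub_ne_val_sub {a b : ZMod m} (h : a ≠ b) (e : ZMod m) :
    (a - e).val ≠ (b - e).val :=
  fun hv => h (sub_left_injective (ZMod.val_injective m hv))

end ZMod

lemma Finset.card_filter_eq_card_filter_add_one {α : Type*} [Fintype α] [DecidableEq α]
    {p q : α → Prop} [DecidablePred p] [DecidablePred q] {a : α}
    (h : ∀ x, x ≠ a → (q x ↔ p x)) (hq : q a) (hp : ¬ p a) :
    #{x | q x} = #{x | p x} + 1 := by
  have hins : univ.filter q = insert a (univ.filter p) := by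
    ext x
    by_cases hx : x = a
    · subst hx; simp [hq]
    · simp [hx, h x hx]
  rw [hins, card_insert_of_notMem (by simp [hp])]

namespace GaussCode

variable {n : ℕ} (D : GaussCode n)

lemma neZero_two_mul (D : GaussCode n) : NeZero (2 * n) :=
  ⟨by have := (D.g 0).1.pos; omega⟩

lemma g_o (c : Fin n) : D.g (D.o c) = (c, true) := (D.over_iff c _).mpr rfl

lemma g_u (c : Fin n) : D.g (D.u c) = (c, false) := (D.under_iff c _).mpr rfl

lemma o_ne_u (c c' : Fin n) : D.o c ≠ D.u c' := by
  intro h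
  simpa [h, g_u] using D.g_o c

lemma o_injective : Function.Injective D.o := by
  intro c c' h
  simpa [h, g_o, eq_comm] using D.g_o c

lemma u_injective : Function.Injective D.u := by
  intro c c' h
  simpa [h, g_u, eq_comm] using D.g_u c

lemma bijective_sumElim_o_u : Function.Bijective (Sum.elim D.o D.u) := by
  constructor
  · rintro (c | c) (c' | c') h
    · exact congrArg _ (D.o_injective h)
    · exact absurd h (D.o_ne_u c c')
    · exact absurd h.symm (D.o_ne_u c' c)
    · exact congrArg _ (D.u_injective h)
  · intro e
    rcases hg : D.g e with ⟨c, _ | _⟩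
    · exact ⟨Sum.inr c, ((D.under_iff c e).mp hg).symm⟩
    · exact ⟨Sum.inl c, ((D.over_iff c e).mp hg).symm⟩

/-- Starting the traversal at `e`, the crossing `c` is met first as an under-passage;
`D.d e` counts these crossings. -/
abbrev UnderFirst (e : ZMod (2 * n)) (c : Fin n) : Prop :=
  (D.u c - e).val < (D.o c - e).val

lemma not_underFirst_o (c : Fin n) : ¬ D.UnderFirst (D.o c) c := by
  simp

lemma underFirst_u (c : Fin n) : D.UnderFirst (D.u c) c := by
  simpa [ZMod.val_pos] using sub_ne_zero.mpr (D.o_ne_u c c)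

section Positions

variable [NeZero (2 * n)]

lemma sum_o_add_sum_u {M : Type*} [AddCommMonoid M] (f : ZMod (2 * n) → M) :
    ∑ c, f (D.o c) + ∑ c, f (D.u c) = ∑ e, f e := by
  rw [← Fintype.sum_bijective _ D.bijective_sumElim_o_u (f ∘ Sum.elim D.o D.u) f fun _ => rfl,
    Fintype.sum_sum_type]
  rfl

lemma not_underFirst_iff {e : ZMod (2 * n)} {c : Fin n} :
    ¬ D.UnderFirst e c ↔ (D.o c - e).val < (D.u c - e).val := by
  have := ZMod.val_sub_ne_val_sub (D.o_ne_u c c) e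
  unfold UnderFirst
  omega

lemma underFirst_add_one_iff {e : ZMod (2 * n)} {c : Fin n} (ho : D.o c ≠ e) (hu : D.u c ≠ e) :
    D.UnderFirst (e + 1) c ↔ D.UnderFirst e c := by
  have := ZMod.val_sub_add_one_add_one ho
  have := ZMod.val_sub_add_one_add_one hu
  unfold UnderFirst
  omega

lemma underFirst_o_add_one (c : Fin n) : D.UnderFirst (D.o c + 1) c := by
  have := ZMod.val_sub_add_one_add_one (D.o_ne_u c c).symm
  have := ZMod.val_self_sub_add_one_add_one (D.o c)
  have := ZMod.val_lt (D.u c - D.o c)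
  unfold UnderFirst
  omega

lemma not_underFirst_u_add_one (c : Fin n) : ¬ D.UnderFirst (D.u c + 1) c := by
  have := ZMod.val_sub_add_one_add_one (D.o_ne_u c c)
  have := ZMod.val_self_sub_add_one_add_one (D.u c)
  have := ZMod.val_lt (D.o c - D.u c)
  unfold UnderFirst
  omega

end Positions

variable {D}

lemma d_eq_d_add_one {D' : GaussCode n} {e e' : ZMod (2 * n)} {c₀ : Fin n}
    (h : ∀ c, c ≠ c₀ → (D'.UnderFirst e' c ↔ D.UnderFirst e c))
    (h' : D'.UnderFirst e' c₀) (h'' : ¬ D.UnderFirst e c₀) :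
    D'.d e' = D.d e + 1 :=
  Finset.card_filter_eq_card_filter_add_one h h' h''

variable (D) [NeZero (2 * n)]

lemma d_o_add_one (c₀ : Fin n) : D.d (D.o c₀ + 1) = D.d (D.o c₀) + 1 :=
  d_eq_d_add_one
    (fun c hc => D.underFirst_add_one_iff (fun h => hc (D.o_injective h)) (D.o_ne_u c₀ c).symm)
    (D.underFirst_o_add_one c₀) (D.not_underFirst_o c₀)

lemma d_u (c₀ : Fin n) : D.d (D.u c₀) = D.d (D.u c₀ + 1) + 1 :=
  d_eq_d_add_one
    (fun c hc => (D.underFirst_add_one_iff (D.o_ne_u c c₀) (fun h => hc (D.u_injective h))).symm)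
    (D.underFirst_u c₀) (D.not_underFirst_u_add_one c₀)

theorem one_add_X_mul_Xpoly :
    (1 + X) * D.Xpoly = ∑ e : ZMod (2 * n), (X : ℤ[X]) ^ D.d e := by
  set U : ℤ[X] := ∑ c, X ^ D.d (D.u c + 1)
  have hsum : ∑ e : ZMod (2 * n), (X : ℤ[X]) ^ D.d e = D.Xpoly + X * U := by
    rw [← D.sum_o_add_sum_u, Xpoly, mul_sum]
    simp only [d_u, pow_succ, mul_comm]
  have hshift : ∑ e : ZMod (2 * n), (X : ℤ[X]) ^ D.d e = X * D.Xpoly + U := by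
    rw [← Fintype.sum_equiv (Equiv.addRight 1) (fun e => (X : ℤ[X]) ^ D.d (e + 1)) _
      fun _ => rfl, ← D.sum_o_add_sum_u (fun e => (X : ℤ[X]) ^ D.d (e + 1)), Xpoly, mul_sum]
    simp only [d_o_add_one, pow_succ, mul_comm]
    rfl
  have hU : U = D.Xpoly := by
    have hX : (X - 1 : ℤ[X]) ≠ 0 := by simpa using X_sub_C_ne_zero (1 : ℤ)
    exact (mul_left_cancel₀ hX (by linear_combination hsum - hshift)).symm
  rw [hsum, hU]
  ring

lemma X_pow_d_eq_ite (c₀ : Fin n) (e : ZMod (2 * n)) :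
    (X : ℤ[X]) ^ D.d e
      = (if (D.o c₀ - e).val < (D.u c₀ - e).val then X ^ D.d e else 0)
        + X * (if (D.u c₀ - e).val < (D.o c₀ - e).val then X ^ (D.d e - 1) else 0) := by
  by_cases hB : D.UnderFirst e c₀
  · have hd : D.d e ≠ 0 := (card_pos.mpr ⟨c₀, by simpa using hB⟩).ne'
    rw [if_neg (D.not_underFirst_iff.mpr · hB), if_pos hB, mul_pow_sub_one hd, zero_add]
  · rw [if_pos (D.not_underFirst_iff.mp hB), if_neg hB, mul_zero, add_zero]

end GaussCode

def GaussCode.IsCrossingChange {n : ℕ} (D D' : GaussCode n) (c₀ : Fin n) : Prop :=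
  D'.g (D.o c₀) = (c₀, false) ∧ D'.g (D.u c₀) = (c₀, true) ∧
    ∀ e, e ≠ D.o c₀ → e ≠ D.u c₀ → D'.g e = D.g e

namespace GaussCode.IsCrossingChange

variable {n : ℕ} {D D' : GaussCode n} {c₀ : Fin n}

lemma o_self (h : D.IsCrossingChange D' c₀) : D'.o c₀ = D.u c₀ :=
  ((D'.over_iff c₀ _).mp h.2.1).symm

lemma u_self (h : D.IsCrossingChange D' c₀) : D'.u c₀ = D.o c₀ :=
  ((D'.under_iff c₀ _).mp h.1).symm

lemma o_of_ne (h : D.IsCrossingChange D' c₀) {c : Fin n} (hc : c ≠ c₀) : D'.o c = D.o c := by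
  refine ((D'.over_iff c _).mp ?_).symm
  rw [h.2.2 _ (fun he => hc (D.o_injective he)) (D.o_ne_u c c₀), D.g_o]

lemma u_of_ne (h : D.IsCrossingChange D' c₀) {c : Fin n} (hc : c ≠ c₀) : D'.u c = D.u c := by
  refine ((D'.under_iff c _).mp ?_).symm
  rw [h.2.2 _ (D.o_ne_u c₀ c).symm (fun he => hc (D.u_injective he)), D.g_u]

lemma underFirst_iff_of_ne (h : D.IsCrossingChange D' c₀) (e : ZMod (2 * n)) {c : Fin n}
    (hc : c ≠ c₀) :
    D'.UnderFirst e c ↔ D.UnderFirst e c := by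
  rw [UnderFirst, h.o_of_ne hc, h.u_of_ne hc]

variable [NeZero (2 * n)]

lemma X_pow_d_eq_ite (h : D.IsCrossingChange D' c₀) (e : ZMod (2 * n)) :
    (X : ℤ[X]) ^ D'.d e
      = X * (if (D.o c₀ - e).val < (D.u c₀ - e).val then X ^ D.d e else 0)
        + (if (D.u c₀ - e).val < (D.o c₀ - e).val then X ^ (D.d e - 1) else 0) := by
  have hswap : D'.UnderFirst e c₀ ↔ (D.o c₀ - e).val < (D.u c₀ - e).val := by
    rw [UnderFirst, h.o_self, h.u_self]
  by_cases hB : D.UnderFirst e c₀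
  · have hd : D.d e = D'.d e + 1 :=
      d_eq_d_add_one (fun c hc => (h.underFirst_iff_of_ne e hc).symm) hB
        (fun h' => D.not_underFirst_iff.mpr (hswap.mp h') hB)
    rw [if_neg (D.not_underFirst_iff.mpr · hB), if_pos hB, mul_zero, zero_add, hd,
      Nat.add_sub_cancel]
  · have hA := D.not_underFirst_iff.mp hB
    have hd : D'.d e = D.d e + 1 :=
      d_eq_d_add_one (fun c hc => h.underFirst_iff_of_ne e hc) (hswap.mpr hA) hB
    rw [if_pos hA, if_neg hB, add_zero, hd, pow_succ', mul_comm]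

end GaussCode.IsCrossingChange

theorem crossing_change_AB_general
    (n : ℕ) (D D' : GaussCode n) (c₀ : Fin n)
    (h1 : D'.g (D.o c₀) = (c₀, false))
    (h2 : D'.g (D.u c₀) = (c₀, true))
    (h3 : ∀ e : ZMod (2 * n), e ≠ D.o c₀ → e ≠ D.u c₀ → D'.g e = D.g e) :
    ((1 + Polynomial.X) * D.Xpoly
      = (∑ k ∈ Finset.range (2 * n),
            if (D.o c₀ - (k : ZMod (2 * n))).val < (D.u c₀ - (k : ZMod (2 * n))).val
            then (Polynomial.X : Polynomial ℤ) ^ D.d (k : ZMod (2 * n)) else 0)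
        + Polynomial.X *
          ∑ k ∈ Finset.range (2 * n),
            if (D.u c₀ - (k : ZMod (2 * n))).val < (D.o c₀ - (k : ZMod (2 * n))).val
            then (Polynomial.X : Polynomial ℤ) ^ (D.d (k : ZMod (2 * n)) - 1) else 0)
    ∧
    ((1 + Polynomial.X) * D'.Xpoly
      = Polynomial.X *
          (∑ k ∈ Finset.range (2 * n),
            if (D.o c₀ - (k : ZMod (2 * n))).val < (D.u c₀ - (k : ZMod (2 * n))).val
            then (Polynomial.X : Polynomial ℤ) ^ D.d (k : ZMod (2 * n)) else 0)
        + ∑ k ∈ Finset.range (2 * n),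
            if (D.u c₀ - (k : ZMod (2 * n))).val < (D.o c₀ - (k : ZMod (2 * n))).val
            then (Polynomial.X : Polynomial ℤ) ^ (D.d (k : ZMod (2 * n)) - 1) else 0) := by
  have := D.neZero_two_mul
  have h : D.IsCrossingChange D' c₀ := ⟨h1, h2, h3⟩
  constructor
  · rw [D.one_add_X_mul_Xpoly, ← ZMod.sum_range_natCast, mul_sum, ← sum_add_distrib]
    exact sum_congr rfl fun k _ => D.X_pow_d_eq_ite c₀ k
  · rw [D'.one_add_X_mul_Xpoly, ← ZMod.sum_range_natCast, mul_sum, ← sum_add_distrib]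
    exact sum_congr rfl fun k _ => h.X_pow_d_eq_ite k

/-- `(1 + t)⬝X_D(t) = A + t⬝B` and `(1 + t)⬝X_{D'}(t) = t⬝A + B`. -/
theorem crossing_change_AB
    (n : ℕ) (hn : 1 ≤ n) (D D' : GaussCode n) (c₀ : Fin n)
    (h1 : D'.g (D.o c₀) = (c₀, false))
    (h2 : D'.g (D.u c₀) = (c₀, true))
    (h3 : ∀ e : ZMod (2 * n), e ≠ D.o c₀ → e ≠ D.u c₀ → D'.g e = D.g e) :
    ((1 + Polynomial.X) * D.Xpoly
      = (∑ k ∈ Finset.range (2 * n),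
            if (D.o c₀ - (k : ZMod (2 * n))).val < (D.u c₀ - (k : ZMod (2 * n))).val
            then (Polynomial.X : Polynomial ℤ) ^ D.d (k : ZMod (2 * n)) else 0)
        + Polynomial.X *
          ∑ k ∈ Finset.range (2 * n),
            if (D.u c₀ - (k : ZMod (2 * n))).val < (D.o c₀ - (k : ZMod (2 * n))).val
            then (Polynomial.X : Polynomial ℤ) ^ (D.d (k : ZMod (2 * n)) - 1) else 0)
    ∧
    ((1 + Polynomial.X) * D'.Xpoly
      = Polynomial.X *
          (∑ k ∈ Finset.range (2 * n),
            if (D.o c₀ - (k : ZMod (2 * n))).val < (D.u c₀ - (k : ZMod (2 * n))).val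
            then (Polynomial.X : Polynomial ℤ) ^ D.d (k : ZMod (2 * n)) else 0)
        + ∑ k ∈ Finset.range (2 * n),
            if (D.u c₀ - (k : ZMod (2 * n))).val < (D.o c₀ - (k : ZMod (2 * n))).val
            then (Polynomial.X : Polynomial ℤ) ^ (D.d (k : ZMod (2 * n)) - 1) else 0) :=
  crossing_change_AB_general n D D' c₀ h1 h2 h3
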